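/- Let G be a connected graph on n vertices, α ∈ [1/2, 1), and let x denote either (∑_i RTr(v_i)²/n)^{1/2} or 2H(G)/n. Then S_{RD_α}(G) ≥ x - ((‖RD_α‖_F² - x²)/(n-1))^{1/2}, with equality if and only if G ≅ K_n. -/

import Mathlib

open Matrix BigOperators Finset

variable {V : Type*} [Fintype V] [DecidableEq V]

/-- Reciprocal distance (Harary) matrix. -/
noncomputable def RD (G : SimpleGraph V) : Matrix V V ℝ :=
  Matrix.of fun i j => if i = j then 0 else (1 : ℝ) / (G.dist i j)

/-- Reciprocal transmission of a vertex. -/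
noncomputable def RTr (G : SimpleGraph V) (i : V) : ℝ := ∑ j, RD G i j

/-- Generalized reciprocal distance matrix. -/
noncomputable def RDa (α : ℝ) (G : SimpleGraph V) : Matrix V V ℝ :=
  α • Matrix.diagonal (RTr G) + (1 - α) • RD G

/-- Harary index. -/
noncomputable def harary (G : SimpleGraph V) : ℝ := (∑ i, RTr G i) / 2

/-- Reciprocal transmission regular graph. -/
def TransRegular (G : SimpleGraph V) : Prop := ∀ i j : V, RTr G i = RTr G j

noncomputable def maxEig {M : Matrix V V ℝ} (hM : M.IsHermitian) : ℝ := ⨆ i, hM.eigenvalues i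

noncomputable def minEig {M : Matrix V V ℝ} (hM : M.IsHermitian) : ℝ := ⨅ i, hM.eigenvalues i

/-- Spread of a real symmetric matrix. -/
noncomputable def spread {M : Matrix V V ℝ} (hM : M.IsHermitian) : ℝ := maxEig hM - minEig hM

/-!
The eigenvalues `λ₁ ≥ ⋯ ≥ λₙ` of `RD_α` are nonnegative: for `α ≥ 1/2` its quadratic form is a
sum of `RD(i,j) (α (vᵢ² + vⱼ²) + 2 (1 - α) vᵢ vⱼ) / 2 ≥ 0`. Expanding the all-ones vector `𝟏` in an
orthonormal eigenbasis, `RD_α 𝟏 = (RTr(vᵢ))ᵢ` turns `n x` resp. `n x²` into a weighted mean of the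
`λₖ` resp. `λₖ²`, so `x ≤ λ₁`. Since `∑ λₖ² = ‖RD_α‖_F²` and `0 ≤ λₙ ≤ λₖ`, we get
`(n - 1) λₙ² ≤ ∑_{k ≥ 2} λₖ² ≤ ‖RD_α‖_F² - x²`, which is the bound. In the equality case
`x = λ₁` and `λ₂ = ⋯ = λₙ`, and `𝟏` has no component outside the `λ₁`-eigenvectors; hence
`RD_α = λₙ I + c J`, all off-diagonal entries agree with those at an edge, and `G = Kₙ`.
Conversely `RD_α(Kₙ) = (α n - 1) I + (1 - α) J` has eigenvalues `n - 1` and `α n - 1`.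
-/

namespace Matrix

variable {ι : Type*} [Fintype ι] [DecidableEq ι]

lemma dotProduct_mulVec_mulVec_of_transpose_mul_self_eq_one {P : Matrix ι ι ℝ}
    (hP : Pᵀ * P = 1) (a b : ι → ℝ) : (P *ᵥ a) ⬝ᵥ (P *ᵥ b) = a ⬝ᵥ b := by
  rw [dotProduct_mulVec, ← vecMul_transpose, vecMul_vecMul, hP, vecMul_one]

namespace IsHermitian

variable {A : Matrix ι ι ℝ} (hA : A.IsHermitian)

local notation "U" => (hA.eigenvectorUnitary : Matrix ι ι ℝ)

lemma eq_eigenvectorUnitary_mul_diagonal_mul_star :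
    A = U * diagonal hA.eigenvalues * star U := by
  simpa using hA.spectral_theorem

lemma star_eigenvectorUnitary_mul_mul_eigenvectorUnitary :
    star U * A * U = diagonal hA.eigenvalues := by
  simpa using hA.conjStarAlgAut_star_eigenvectorUnitary

lemma eigenvectorUnitary_mul_star_eigenvectorUnitary : U * star U = 1 :=
  Unitary.coe_mul_star_self _

lemma star_eigenvectorUnitary_mulVec_mulVec (v : ι → ℝ) :
    star U *ᵥ (A *ᵥ v) = hA.eigenvalues * (star U *ᵥ v) := by
  have hdiag : star U * A = diagonal hA.eigenvalues * star U := by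
    rw [← star_eigenvectorUnitary_mul_mul_eigenvectorUnitary, mul_assoc _ U,
      eigenvectorUnitary_mul_star_eigenvectorUnitary, mul_one]
  ext k
  rw [mulVec_mulVec, hdiag, ← mulVec_mulVec, mulVec_diagonal, Pi.mul_apply]

lemma eigenvectorUnitary_mulVec_star_eigenvectorUnitary_mulVec (v : ι → ℝ) :
    U *ᵥ (star U *ᵥ v) = v := by
  rw [mulVec_mulVec, eigenvectorUnitary_mul_star_eigenvectorUnitary, one_mulVec]

lemma dotProduct_star_eigenvectorUnitary_mulVec (a b : ι → ℝ) :
    (star U *ᵥ a) ⬝ᵥ (star U *ᵥ b) = a ⬝ᵥ b := by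
  refine dotProduct_mulVec_mulVec_of_transpose_mul_self_eq_one ?_ a b
  simpa [star_eq_conjTranspose] using hA.eigenvectorUnitary_mul_star_eigenvectorUnitary

lemma sum_sq_star_eigenvectorUnitary_mulVec (v : ι → ℝ) :
    ∑ k, (star U *ᵥ v) k ^ 2 = v ⬝ᵥ v := by
  rw [← hA.dotProduct_star_eigenvectorUnitary_mulVec]
  simp only [dotProduct, sq]

lemma sum_eigenvalues_mul_sq_star_eigenvectorUnitary_mulVec (v : ι → ℝ) :
    ∑ k, hA.eigenvalues k * (star U *ᵥ v) k ^ 2 = v ⬝ᵥ (A *ᵥ v) := by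
  rw [← hA.dotProduct_star_eigenvectorUnitary_mulVec, star_eigenvectorUnitary_mulVec_mulVec]
  simp only [dotProduct, Pi.mul_apply]
  exact sum_congr rfl fun k _ => by ring

lemma sum_sq_eigenvalues_mul_sq_star_eigenvectorUnitary_mulVec (v : ι → ℝ) :
    ∑ k, hA.eigenvalues k ^ 2 * (star U *ᵥ v) k ^ 2 = (A *ᵥ v) ⬝ᵥ (A *ᵥ v) := by
  rw [← hA.dotProduct_star_eigenvectorUnitary_mulVec, star_eigenvectorUnitary_mulVec_mulVec]
  simp only [dotProduct, Pi.mul_apply]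
  exact sum_congr rfl fun k _ => by ring

lemma sum_sq_eigenvalues : ∑ k, hA.eigenvalues k ^ 2 = ∑ i, ∑ j, A i j ^ 2 := by
  have htrace : (A * A).trace = ∑ k, hA.eigenvalues k ^ 2 := by
    calc (A * A).trace = (star U * A * U * (star U * A * U)).trace := by
          rw [show star U * A * U * (star U * A * U) = star U * (A * (U * star U) * A * U) by
              simp only [mul_assoc], eigenvectorUnitary_mul_star_eigenvectorUnitary, mul_one,
            trace_mul_comm (star U), mul_assoc, mul_assoc,
            eigenvectorUnitary_mul_star_eigenvectorUnitary, mul_one]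
      _ = ∑ k, hA.eigenvalues k ^ 2 := by
          simp only [star_eigenvectorUnitary_mul_mul_eigenvectorUnitary, diagonal_mul_diagonal,
            trace_diagonal, sq]
  rw [← htrace, trace]
  refine sum_congr rfl fun i _ => ?_
  simp only [diag_apply, mul_apply, sq]
  refine sum_congr rfl fun j _ => ?_
  rw [show A j i = A i j by simpa using hA.apply i j]

lemma apply_eq_sum_eigenvalues_mul (i j : ι) :
    A i j = ∑ k, hA.eigenvalues k * (U i k * U j k) := by
  rw [congrFun (congrFun hA.eq_eigenvectorUnitary_mul_diagonal_mul_star i) j]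
  simp only [mul_apply, diagonal_apply, star_apply, star_trivial, mul_ite, mul_zero,
    sum_ite_eq', mem_univ, if_true]
  exact sum_congr rfl fun k _ => by ring

lemma sum_eigenvectorUnitary_mul_eigenvectorUnitary (i j : ι) :
    ∑ k, U i k * U j k = (1 : Matrix ι ι ℝ) i j := by
  rw [← hA.eigenvectorUnitary_mul_star_eigenvectorUnitary, mul_apply]
  simp only [star_apply, star_trivial]

lemma dotProduct_self_eigenvectorBasis (k : ι) :
    ⇑(hA.eigenvectorBasis k) ⬝ᵥ ⇑(hA.eigenvectorBasis k) = 1 := by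
  rw [← hA.sum_sq_star_eigenvectorUnitary_mulVec, star_eigenvectorUnitary_mulVec]
  simp [Pi.single_apply]

lemma dotProduct_mulVec_eigenvectorBasis (k : ι) :
    ⇑(hA.eigenvectorBasis k) ⬝ᵥ (A *ᵥ ⇑(hA.eigenvectorBasis k)) = hA.eigenvalues k := by
  rw [← hA.sum_eigenvalues_mul_sq_star_eigenvectorUnitary_mulVec, star_eigenvectorUnitary_mulVec]
  simp [Pi.single_apply]

lemma le_eigenvalues_of_forall_le {m : ℝ} (h : ∀ v, m * (v ⬝ᵥ v) ≤ v ⬝ᵥ (A *ᵥ v)) (k : ι) :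
    m ≤ hA.eigenvalues k := by
  simpa [dotProduct_self_eigenvectorBasis, dotProduct_mulVec_eigenvectorBasis] using
    h (hA.eigenvectorBasis k)

lemma eigenvalues_le_of_forall_le {M : ℝ} (h : ∀ v, v ⬝ᵥ (A *ᵥ v) ≤ M * (v ⬝ᵥ v)) (k : ι) :
    hA.eigenvalues k ≤ M := by
  simpa [dotProduct_self_eigenvectorBasis, dotProduct_mulVec_eigenvectorBasis] using
    h (hA.eigenvectorBasis k)

lemma apply_eq_of_eigenvalues_eq {i₁ : ι} {μ : ℝ} (hμ : ∀ k, k ≠ i₁ → hA.eigenvalues k = μ)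
    (i j : ι) :
    A i j = μ * (1 : Matrix ι ι ℝ) i j + (hA.eigenvalues i₁ - μ) * (U i i₁ * U j i₁) := by
  rw [hA.apply_eq_sum_eigenvalues_mul, ← hA.sum_eigenvectorUnitary_mul_eigenvectorUnitary,
    mul_sum, ← add_sum_erase _ _ (mem_univ i₁), ← add_sum_erase _ _ (mem_univ i₁),
    sum_congr rfl fun k hk => by rw [hμ k (ne_of_mem_erase hk)]]
  ring

/-- `A = μ • 1 + c • J`: either `λ i₁ = μ`, or the all-ones vector is a multiple of the
`i₁`-th eigenvector, so that column `i₁` of the eigenvector matrix is constant. -/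
lemma apply_eq_apply_of_eigenvalues_eq {i₁ : ι} {μ : ℝ}
    (hμ : ∀ k, k ≠ i₁ → hA.eigenvalues k = μ)
    (hones : ∀ k, hA.eigenvalues k ≠ hA.eigenvalues i₁ → (star U *ᵥ fun _ => 1) k = 0)
    {i j k l : ι} (hij : i ≠ j) (hkl : k ≠ l) : A i j = A k l := by
  rw [hA.apply_eq_of_eigenvalues_eq hμ, hA.apply_eq_of_eigenvalues_eq hμ, one_apply_ne hij,
    one_apply_ne hkl]
  by_cases htop : hA.eigenvalues i₁ = μ
  · simp [htop]
  set w := star U *ᵥ fun _ => (1 : ℝ)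
  have hw : w = Pi.single i₁ (w i₁) := by
    ext k
    by_cases hk : k = i₁
    · subst hk; simp
    · rw [Pi.single_eq_of_ne hk, hones k (by rw [hμ k hk]; exact Ne.symm htop)]
  have hcol (i : ι) : U i i₁ * w i₁ = 1 := by
    have := congrFun (hA.eigenvectorUnitary_mulVec_star_eigenvectorUnitary_mulVec fun _ => 1) i
    change (U *ᵥ w) i = 1 at this
    rw [hw, mulVec_single] at this
    simpa using this
  have hconst (i : ι) : U i i₁ = U k i₁ :=
    mul_right_cancel₀ (right_ne_zero_of_mul_eq_one (hcol i)) ((hcol i).trans (hcol k).symm)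
  rw [hconst i, hconst j, hconst l]

end IsHermitian

end Matrix

section Extremal

variable {M : Matrix V V ℝ} (hM : M.IsHermitian)

lemma maxEig_eq_of_forall_le {i : V} (h : ∀ k, hM.eigenvalues k ≤ hM.eigenvalues i) :
    maxEig hM = hM.eigenvalues i :=
  have : Nonempty V := ⟨i⟩
  le_antisymm (ciSup_le h) (le_ciSup (Set.finite_range _).bddAbove i)

lemma minEig_le (k : V) : minEig hM ≤ hM.eigenvalues k :=
  ciInf_le (Set.finite_range _).bddBelow k

lemma maxEig_le [Nonempty V] {c : ℝ} (h : ∀ k, hM.eigenvalues k ≤ c) : maxEig hM ≤ c :=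
  ciSup_le h

lemma le_minEig [Nonempty V] {c : ℝ} (h : ∀ k, c ≤ hM.eigenvalues k) : c ≤ minEig hM :=
  le_ciInf h

end Extremal

section WeightedMean

variable {ι : Type*} [Fintype ι] {e w : ι → ℝ} {i : ι} {p : ℕ}

lemma sum_pow_mul_sq_le (he : ∀ k, 0 ≤ e k) (hi : ∀ k, e k ≤ e i) :
    ∑ k, e k ^ p * w k ^ 2 ≤ e i ^ p * ∑ k, w k ^ 2 := by
  rw [mul_sum]
  exact sum_le_sum fun k _ =>
    mul_le_mul_of_nonneg_right (pow_le_pow_left₀ (he k) (hi k) p) (sq_nonneg _)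

lemma le_of_pow_mul_sum_sq_eq {x : ℝ} (hp : p ≠ 0) (he : ∀ k, 0 ≤ e k) (hi : ∀ k, e k ≤ e i)
    (hw : 0 < ∑ k, w k ^ 2) (h : x ^ p * ∑ k, w k ^ 2 = ∑ k, e k ^ p * w k ^ 2) : x ≤ e i :=
  le_of_pow_le_pow_left₀ hp (he i) <|
    le_of_mul_le_mul_right (h.le.trans (sum_pow_mul_sq_le he hi)) hw

lemma eq_zero_of_pow_mul_sum_sq_eq (hp : p ≠ 0) (he : ∀ k, 0 ≤ e k) (hi : ∀ k, e k ≤ e i)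
    (h : e i ^ p * ∑ k, w k ^ 2 = ∑ k, e k ^ p * w k ^ 2) {k : ι} (hk : e k < e i) :
    w k = 0 := by
  have hterms : ∑ k, (e i ^ p - e k ^ p) * w k ^ 2 = 0 := by
    simp only [sub_mul, sum_sub_distrib, ← mul_sum, h, sub_self]
  have hnonneg : ∀ k ∈ univ, 0 ≤ (e i ^ p - e k ^ p) * w k ^ 2 := fun k _ =>
    mul_nonneg (sub_nonneg.2 (pow_le_pow_left₀ (he k) (hi k) p)) (sq_nonneg _)
  have hpos : 0 < e i ^ p - e k ^ p := sub_pos.2 (pow_lt_pow_left₀ hk (he k) hp)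
  simpa [hpos.ne'] using (sum_eq_zero_iff_of_nonneg hnonneg).1 hterms k (mem_univ k)

end WeightedMean

section Spread

variable {ι : Type*} [Fintype ι] [DecidableEq ι] {e : ι → ℝ} {i : ι} {m x : ℝ}

lemma sum_univ_erase_const (c : ℝ) :
    ∑ _k ∈ univ.erase i, c = ((Fintype.card ι : ℝ) - 1) * c := by
  rw [sum_const, card_erase_of_mem (mem_univ i), card_univ, nsmul_eq_mul,
    Nat.cast_sub (Fintype.card_pos_iff.2 ⟨i⟩), Nat.cast_one]

lemma sum_ite_eq_add (a b : ℝ) :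
    ∑ j, (if i = j then a else b) = a + (Fintype.card ι - 1) * b := by
  rw [← add_sum_erase _ _ (mem_univ i), if_pos rfl,
    sum_congr rfl fun j hj => if_neg (ne_of_mem_erase hj).symm, sum_univ_erase_const]

lemma sub_sqrt_le_sub (hN : 1 < Fintype.card ι) (hm : ∀ k, m ≤ e k) (hx₀ : 0 ≤ x)
    (hx : x ≤ e i) :
    x - √((∑ k, e k ^ 2 - x ^ 2) / (Fintype.card ι - 1)) ≤ e i - m ∧
      (x - √((∑ k, e k ^ 2 - x ^ 2) / (Fintype.card ι - 1)) = e i - m →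
        x = e i ∧ ∀ k, k ≠ i → e k = m) := by
  have hN' : (0 : ℝ) < Fintype.card ι - 1 := by
    rw [sub_pos]; exact_mod_cast hN
  have hsplit : ∑ k, e k ^ 2 = e i ^ 2 + ∑ k ∈ univ.erase i, e k ^ 2 :=
    (add_sum_erase _ _ (mem_univ i)).symm
  have hm_sq_le (hm₀ : 0 ≤ m) (k : ι) : m ^ 2 ≤ e k ^ 2 := pow_le_pow_left₀ hm₀ (hm k) 2
  have hm_le : m ≤ √((∑ k, e k ^ 2 - x ^ 2) / (Fintype.card ι - 1)) := by
    rcases lt_or_ge m 0 with hm₀ | hm₀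
    · exact hm₀.le.trans (Real.sqrt_nonneg _)
    refine Real.le_sqrt_of_sq_le ((le_div_iff₀ hN').2 ?_)
    have hrest := sum_le_sum fun k (_ : k ∈ univ.erase i) => hm_sq_le hm₀ k
    rw [sum_univ_erase_const] at hrest
    nlinarith [pow_le_pow_left₀ hx₀ hx 2]
  refine ⟨by linarith, fun heq => ⟨by linarith, fun k hk => ?_⟩⟩
  have hxi : x = e i := by linarith
  have hm_eq : m = √((∑ k, e k ^ 2 - x ^ 2) / (Fintype.card ι - 1)) := by linarith
  have hm₀ : 0 ≤ m := hm_eq ▸ Real.sqrt_nonneg _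
  have hrest : ∑ k ∈ univ.erase i, e k ^ 2 = ((Fintype.card ι : ℝ) - 1) * m ^ 2 := by
    rw [hm_eq, Real.sq_sqrt (by rw [hsplit, hxi, add_sub_cancel_left]; positivity),
      hsplit, hxi, add_sub_cancel_left, mul_div_cancel₀ _ hN'.ne']
  have hterms : ∑ k ∈ univ.erase i, (e k ^ 2 - m ^ 2) = 0 := by
    rw [sum_sub_distrib, hrest, sum_univ_erase_const, sub_self]
  have hk' := (sum_eq_zero_iff_of_nonneg fun k _ => sub_nonneg.2 (hm_sq_le hm₀ k)).1 hterms k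
    (mem_erase.2 ⟨hk, mem_univ k⟩)
  exact (sq_eq_sq₀ (hm₀.trans (hm k)) hm₀).1 (sub_eq_zero.1 hk')

end Spread

section ReciprocalDistance

variable (G : SimpleGraph V)

omit [Fintype V] in
lemma RD_apply_self (i : V) : RD G i i = 0 := by simp [RD]

omit [Fintype V] in
lemma RD_apply_of_ne {i j : V} (h : i ≠ j) : RD G i j = 1 / G.dist i j := by simp [RD, h]

omit [Fintype V] in
lemma RD_nonneg (i j : V) : 0 ≤ RD G i j := by
  simp only [RD, of_apply]; split_ifs <;> positivity

omit [Fintype V] in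
lemma RD_comm (i j : V) : RD G i j = RD G j i := by
  simp only [RD, of_apply, eq_comm (a := i), G.dist_comm]

lemma RTr_nonneg (i : V) : 0 ≤ RTr G i :=
  sum_nonneg fun j _ => RD_nonneg G i j

lemma harary_nonneg : 0 ≤ harary G :=
  div_nonneg (sum_nonneg fun i _ => RTr_nonneg G i) zero_le_two

lemma RDa_apply (α : ℝ) (i j : V) :
    RDa α G i j = (if i = j then α * RTr G i else 0) + (1 - α) * RD G i j := by
  simp [RDa, diagonal_apply]

lemma RDa_apply_of_ne (α : ℝ) {i j : V} (h : i ≠ j) : RDa α G i j = (1 - α) * RD G i j := by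
  simp [RDa_apply, h]

lemma isHermitian_RDa (α : ℝ) : (RDa α G).IsHermitian := by
  ext i j
  simp only [conjTranspose_apply, star_trivial, RDa_apply, RD_comm G j i, eq_comm (a := j)]
  split_ifs with h <;> simp [h]

lemma RDa_mulVec_one (α : ℝ) : RDa α G *ᵥ (fun _ => 1) = RTr G := by
  ext i
  simp only [mulVec, dotProduct, mul_one, RDa_apply, sum_add_distrib, sum_ite_eq, mem_univ,
    if_true, ← mul_sum]
  rw [← RTr]; ring

lemma two_mul_dotProduct_RDa_mulVec (α : ℝ) (v : V → ℝ) :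
    2 * (v ⬝ᵥ (RDa α G *ᵥ v)) =
      ∑ i, ∑ j, RD G i j * (α * (v i ^ 2 + v j ^ 2) + 2 * (1 - α) * (v i * v j)) := by
  have hform : v ⬝ᵥ (RDa α G *ᵥ v) =
      ∑ i, ∑ j, RD G i j * (α * v i ^ 2 + (1 - α) * (v i * v j)) := by
    simp only [dotProduct, mulVec, RDa_apply, add_mul, ite_mul, zero_mul, sum_add_distrib,
      sum_ite_eq, mem_univ, if_true, mul_add, RTr, mul_sum, sum_mul]
    congr 1 <;> exact sum_congr rfl fun i _ => sum_congr rfl fun j _ => by ring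
  have hswap : ∑ i, ∑ j, RD G i j * (α * v i ^ 2 + (1 - α) * (v i * v j))
      = ∑ i, ∑ j, RD G i j * (α * v j ^ 2 + (1 - α) * (v i * v j)) := by
    rw [sum_comm]
    exact sum_congr rfl fun i _ => sum_congr rfl fun j _ => by rw [RD_comm G j i]; ring
  rw [two_mul, hform]
  nth_rewrite 2 [hswap]
  simp only [← sum_add_distrib]
  exact sum_congr rfl fun i _ => sum_congr rfl fun j _ => by ring

lemma posSemidef_RDa {α : ℝ} (hα : 1 / 2 ≤ α) : (RDa α G).PosSemidef := by
  refine .of_dotProduct_mulVec_nonneg (isHermitian_RDa G α) fun v => ?_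
  -- the form has matrix `!![α, 1 - α; 1 - α, α]`, positive semidefinite iff `|1 - α| ≤ α`
  have hpair (a b : ℝ) : 0 ≤ α * (a ^ 2 + b ^ 2) + 2 * (1 - α) * (a * b) := by
    rcases le_total α 1 with h | h
    · nlinarith [mul_nonneg (sub_nonneg.2 h) (sq_nonneg (a + b)), sq_nonneg a, sq_nonneg b]
    · nlinarith [mul_nonneg (sub_nonneg.2 h) (sq_nonneg (a - b)), sq_nonneg a, sq_nonneg b]
  have h2 : 0 ≤ 2 * (v ⬝ᵥ (RDa α G *ᵥ v)) := by
    rw [two_mul_dotProduct_RDa_mulVec]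
    exact sum_nonneg fun i _ => sum_nonneg fun j _ => mul_nonneg (RD_nonneg G i j) (hpair _ _)
  rw [star_trivial]
  linarith

lemma eq_top_of_RDa_apply_eq {α : ℝ} (hα : α < 1) (hG : G.Connected)
    (h : ∀ i j k l, i ≠ j → k ≠ l → RDa α G i j = RDa α G k l) : G = ⊤ := by
  ext i j
  refine ⟨fun hij => hij.ne, fun hij => ?_⟩
  obtain ⟨p⟩ := hG.preconnected i j
  have hadj := p.adj_snd (SimpleGraph.Walk.not_nil_of_ne hij)
  have hRD := h i j i p.snd hij hadj.ne
  rw [RDa_apply_of_ne G α hij, RDa_apply_of_ne G α hadj.ne, RD_apply_of_ne G hij,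
    RD_apply_of_ne G hadj.ne, SimpleGraph.dist_eq_one_iff_adj.2 hadj] at hRD
  have hdist : (G.dist i j : ℝ) = 1 := by
    simpa using mul_left_cancel₀ (sub_ne_zero.2 hα.ne') hRD
  exact SimpleGraph.dist_eq_one_iff_adj.1 (by exact_mod_cast hdist)

end ReciprocalDistance

section CompleteGraph

omit [Fintype V] in
lemma RD_top_apply (i j : V) : RD (⊤ : SimpleGraph V) i j = if i = j then 0 else 1 := by
  split_ifs with h
  · rw [h, RD_apply_self]
  · rw [RD_apply_of_ne _ h, SimpleGraph.dist_eq_one_iff_adj.2 ((SimpleGraph.top_adj i j).2 h)]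
    norm_num

lemma RTr_top (i : V) : RTr (⊤ : SimpleGraph V) i = Fintype.card V - 1 := by
  simp only [RTr, RD_top_apply, sum_ite_eq_add, zero_add, mul_one]

lemma RDa_top (α : ℝ) :
    RDa α (⊤ : SimpleGraph V) =
      (α * Fintype.card V - 1) • (1 : Matrix V V ℝ) + (1 - α) • of fun _ _ => 1 := by
  ext i j
  by_cases h : i = j
  · simp [RDa_apply, RD_top_apply, RTr_top, h]; ring
  · simp [RDa_apply, RD_top_apply, h]

lemma dotProduct_RDa_top_mulVec (α : ℝ) (v : V → ℝ) :
    v ⬝ᵥ (RDa α (⊤ : SimpleGraph V) *ᵥ v) =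
      (α * Fintype.card V - 1) * (v ⬝ᵥ v) + (1 - α) * (∑ i, v i) ^ 2 := by
  rw [RDa_top, add_mulVec, smul_mulVec, smul_mulVec, one_mulVec, dotProduct_add, dotProduct_smul,
    dotProduct_smul]
  simp [dotProduct, mulVec, sq, sum_mul]

lemma sum_sq_RDa_top (α : ℝ) :
    ∑ i, ∑ j, RDa α (⊤ : SimpleGraph V) i j ^ 2 = Fintype.card V * (α * (Fintype.card V - 1)) ^ 2
      + Fintype.card V * (Fintype.card V - 1) * (1 - α) ^ 2 := by
  have hentry (i j : V) : RDa α (⊤ : SimpleGraph V) i j ^ 2 =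
      if i = j then (α * (Fintype.card V - 1)) ^ 2 else (1 - α) ^ 2 := by
    by_cases h : i = j <;> simp [RDa_apply, RD_top_apply, RTr_top, h]
  simp only [hentry, sum_ite_eq_add, sum_const, card_univ, nsmul_eq_mul]
  ring

lemma spread_RDa_top_le {α : ℝ} (hα₁ : 1 / 2 ≤ α) (hα₂ : α ≤ 1) (hN : 1 < Fintype.card V)
    (hH : (RDa α (⊤ : SimpleGraph V)).IsHermitian) :
    spread hH ≤ (Fintype.card V - 1) -
      √((∑ i, ∑ j, RDa α (⊤ : SimpleGraph V) i j ^ 2 - (Fintype.card V - 1) ^ 2)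
        / (Fintype.card V - 1)) := by
  have : Nonempty V := Fintype.card_pos_iff.1 (by omega)
  have hN' : (2 : ℝ) ≤ Fintype.card V := by exact_mod_cast hN
  have hmax : maxEig hH ≤ Fintype.card V - 1 := by
    refine maxEig_le hH (hH.eigenvalues_le_of_forall_le fun v => ?_)
    have hcs : (∑ i, v i) ^ 2 ≤ Fintype.card V * (v ⬝ᵥ v) := by
      simpa [dotProduct, ← sq] using sq_sum_le_card_mul_sum_sq (s := univ) (f := v)
    rw [dotProduct_RDa_top_mulVec]
    nlinarith [mul_le_mul_of_nonneg_left hcs (sub_nonneg.2 hα₂)]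
  have hmin : α * Fintype.card V - 1 ≤ minEig hH := by
    refine le_minEig hH (hH.le_eigenvalues_of_forall_le fun v => ?_)
    rw [dotProduct_RDa_top_mulVec]
    nlinarith [mul_nonneg (sub_nonneg.2 hα₂) (sq_nonneg (∑ i, v i))]
  have hquot : (Fintype.card V * (α * (Fintype.card V - 1)) ^ 2
      + Fintype.card V * (Fintype.card V - 1) * (1 - α) ^ 2 - (Fintype.card V - 1) ^ 2)
      / (Fintype.card V - 1) = (α * Fintype.card V - 1) ^ 2 := by
    rw [div_eq_iff (by linarith)]
    ring
  rw [spread, sum_sq_RDa_top, hquot, Real.sqrt_sq (by nlinarith)]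
  linarith

end CompleteGraph

/-- `2 * harary G / n` is the arithmetic mean of the reciprocal transmissions, and the other value
their quadratic mean. -/
def IsRTrMean (G : SimpleGraph V) (x : ℝ) : Prop :=
  x = √((∑ i, RTr G i ^ 2) / Fintype.card V) ∨ x = 2 * harary G / Fintype.card V

namespace IsRTrMean

variable {G : SimpleGraph V} {x : ℝ}

lemma nonneg (hx : IsRTrMean G x) : 0 ≤ x := by
  rcases hx with rfl | rfl
  · exact Real.sqrt_nonneg _
  · exact div_nonneg (mul_nonneg zero_le_two (harary_nonneg G)) (Nat.cast_nonneg _)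

lemma exists_pow_mul_sum_sq_eq [Nonempty V] {α : ℝ} (hx : IsRTrMean G x)
    (hH : (RDa α G).IsHermitian) :
    ∃ p ≠ 0, x ^ p * ∑ k, (star (hH.eigenvectorUnitary : Matrix V V ℝ) *ᵥ fun _ => 1) k ^ 2 =
      ∑ k, hH.eigenvalues k ^ p *
        (star (hH.eigenvectorUnitary : Matrix V V ℝ) *ᵥ fun _ => 1) k ^ 2 := by
  have hN : (0 : ℝ) < Fintype.card V := by exact_mod_cast Fintype.card_pos
  have hones : (fun _ => (1 : ℝ)) ⬝ᵥ (fun _ : V => 1) = Fintype.card V := by simp [dotProduct]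
  rw [hH.sum_sq_star_eigenvectorUnitary_mulVec, hones]
  rcases hx with rfl | rfl
  · refine ⟨2, two_ne_zero, ?_⟩
    rw [hH.sum_sq_eigenvalues_mul_sq_star_eigenvectorUnitary_mulVec, RDa_mulVec_one,
      Real.sq_sqrt (by positivity), div_mul_cancel₀ _ hN.ne']
    simp [dotProduct, sq]
  · refine ⟨1, one_ne_zero, ?_⟩
    simp only [pow_one]
    rw [hH.sum_eigenvalues_mul_sq_star_eigenvectorUnitary_mulVec, RDa_mulVec_one, harary]
    field_simp
    simp [dotProduct]

lemma eq_card_sub_one_of_top [Nonempty V] (hx : IsRTrMean (⊤ : SimpleGraph V) x) :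
    x = Fintype.card V - 1 := by
  have hN : (1 : ℝ) ≤ Fintype.card V := by exact_mod_cast Fintype.card_pos
  simp only [IsRTrMean, harary, RTr_top, sum_const, card_univ, nsmul_eq_mul] at hx
  rcases hx with rfl | rfl
  · rw [mul_div_cancel_left₀ _ (by positivity), Real.sqrt_sq (by linarith)]
  · field_simp

end IsRTrMean

/-- Lower bound for the `RD_α`-spread in terms of the Frobenius norm, for `α ∈ [1/2, 1)`,
where `x` is either `√(∑ RTr(v_i)²/n)` or `2H(G)/n`; equality iff `G ≅ K_n`
(Theorem 2.6 (ii)). -/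
theorem RDa_spread_lower_frobenius {n : ℕ} (hn : 2 ≤ n) (G : SimpleGraph (Fin n))
    (hG : G.Connected) (α : ℝ) (hα : α ∈ Set.Ico (1 / 2 : ℝ) 1)
    (hH : (RDa α G).IsHermitian) (x : ℝ)
    (hx : x = Real.sqrt ((∑ i, (RTr G i) ^ 2) / n) ∨ x = 2 * harary G / n) :
    x - Real.sqrt (((∑ i, ∑ j, (RDa α G i j) ^ 2) - x ^ 2) / (n - 1)) ≤ spread hH ∧
    (spread hH = x - Real.sqrt (((∑ i, ∑ j, (RDa α G i j) ^ 2) - x ^ 2) / (n - 1)) ↔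
      G = (⊤ : SimpleGraph (Fin n))) := by
  obtain ⟨hα₁, hα₂⟩ := hα
  have : Nonempty (Fin n) := ⟨⟨0, by omega⟩⟩
  have hmean : IsRTrMean G x := by simpa only [IsRTrMean, Fintype.card_fin] using hx
  have heig₀ : ∀ k, 0 ≤ hH.eigenvalues k := (posSemidef_RDa G hα₁).eigenvalues_nonneg
  obtain ⟨top, htop⟩ := Finite.exists_max hH.eigenvalues
  obtain ⟨p, hp, hxp⟩ := hmean.exists_pow_mul_sum_sq_eq hH
  have hxtop : x ≤ hH.eigenvalues top := le_of_pow_mul_sum_sq_eq hp heig₀ htop (by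
    rw [hH.sum_sq_star_eigenvectorUnitary_mulVec]; simp [dotProduct]; omega) hxp
  have hspread : spread hH = hH.eigenvalues top - minEig hH := by
    rw [spread, maxEig_eq_of_forall_le hH htop]
  obtain ⟨hle, heq⟩ := sub_sqrt_le_sub (by simp; omega) (minEig_le hH) hmean.nonneg hxtop
  simp only [Fintype.card_fin, hH.sum_sq_eigenvalues, ← hspread] at hle heq
  refine ⟨hle, fun h => ?_, ?_⟩
  · obtain ⟨hxtop, hμ⟩ := heq h.symm
    refine eq_top_of_RDa_apply_eq G hα₂ hG fun i j k l hij hkl =>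
      hH.apply_eq_apply_of_eigenvalues_eq hμ (fun k hk => ?_) hij hkl
    exact eq_zero_of_pow_mul_sum_sq_eq hp heig₀ htop (hxtop ▸ hxp) ((htop k).lt_of_ne hk)
  · rintro rfl
    refine le_antisymm ?_ hle
    rw [hmean.eq_card_sub_one_of_top]
    simpa using spread_RDa_top_le hα₁ hα₂.le (by simp; omega) hH
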